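/- arXiv:2207.07391 — 5 statements merged into one kernel-verified Lean document; each statement's English description precedes it below -/
import Mathlib

section
/- Let 1 ≤ t ≤ n and let B be a family of t-element subsets of [n]. Let C be the initial segment of the colexicographic order on t-element subsets of [n] of size |B|. Then ν(B) ≥ ν(C), where ν(A) denotes the maximum size of a matching between A and its shadow ∂A in the containment bipartite graph. -/
/-- A family of finsets that is a chain under inclusion. -/
def IsChainF (C : Finset (Finset ℕ)) : Prop :=
  ∀ A ∈ C, ∀ B ∈ C, A ⊆ B ∨ B ⊆ A

/-- A skipless chain: a chain in which every cardinality between those of two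
members is attained by some member. -/
def SkiplessChain (C : Finset (Finset ℕ)) : Prop :=
  IsChainF C ∧ ∀ A ∈ C, ∀ B ∈ C, ∀ k : ℕ, A.card ≤ k → k ≤ B.card → ∃ D ∈ C, D.card = k

/-- The maximum size of a matching between a family `𝒜` and its shadow in the
containment bipartite graph. -/
noncomputable def nu (𝒜 : Finset (Finset ℕ)) : ℕ :=
  sSup {m | ∃ s ⊆ 𝒜, s.card = m ∧ ∃ f : Finset ℕ → Finset ℕ,
    Set.InjOn f ↑s ∧ ∀ a ∈ s, f a ∈ Finset.shadow 𝒜 ∧ f a ⊆ a}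

/-- The initial segment of the colexicographic order on `t`-element subsets of ℕ
of size `m`. -/
def colexSeg (m t : ℕ) : Finset (Finset ℕ) :=
  ((Finset.range (t + m)).powerset).filter (fun S => S.card = t ∧
    (((Finset.range (t + m)).powerset).filter
      (fun B => B.card = t ∧ toColex B < toColex S)).card < m)

/-- `F` is a `k`-antichain saturated family of subsets of `[n] = {0, …, n-1}`. -/
def AntichainSat (n k : ℕ) (F : Finset (Finset ℕ)) : Prop :=
  (∀ X ∈ F, X ⊆ Finset.range n) ∧
  (¬ ∃ 𝒜 ⊆ F, 𝒜.card = k ∧ IsAntichain (· ⊆ ·) (𝒜 : Set (Finset ℕ))) ∧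
  (∀ X : Finset ℕ, X ⊆ Finset.range n → X ∉ F →
    ∃ 𝒜 ⊆ insert X F, 𝒜.card = k ∧ IsAntichain (· ⊆ ·) (𝒜 : Set (Finset ℕ)))

/-- The antichain saturation number `sat*(n, k)`. -/
noncomputable def satStar (n k : ℕ) : ℕ :=
  sInf {m | ∃ F : Finset (Finset ℕ), AntichainSat n k F ∧ F.card = m}

noncomputable def cAux (k ℓ : ℕ) : ℕ → ℕ
  | 0 => k - 1
  | d + 1 => nu (colexSeg (cAux k ℓ d) (ℓ / 2 - d))

/-- The sequence `c_t` from the paper: `c_t = k - 1` for `t ≥ ⌊ℓ/2⌋` and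
`c_t = ν(C(c_{t+1}, t+1))` for `t < ⌊ℓ/2⌋`. -/
noncomputable def cseq (k ℓ t : ℕ) : ℕ :=
  if ℓ / 2 ≤ t then k - 1 else cAux k ℓ (ℓ / 2 - t)

/-!
Defect Hall: some `S ⊆ ℬ` satisfies `ν(ℬ) ≥ |ℬ| - (|S| - |∂S|)`. Conversely, in a uniform family `𝒜`
a matching sends the members of any `S ⊆ 𝒜` it covers into `∂S`, so `ν(𝒜) ≤ |𝒜| - |S| + |∂S|`.
Apply this to the colex segment `𝒞` of size `|ℬ|`, with `S` replaced by its colex initial segment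
of size `|S|`: by Kruskal–Katona the latter has a shadow no larger than `∂S`.
-/

open Finset
open scoped FinsetFamily

theorem Finset.card_filter_card_filter_lt_lt {α : Type*} [LinearOrder α] (s : Finset α) (m : ℕ) :
    #{x ∈ s | #{y ∈ s | y < x} < m} = min m #s := by
  induction s using Finset.induction_on_max with
  | empty => simp
  | insert a s ha ih =>
    have ha' : a ∉ s := fun h => lt_irrefl a (ha a h)
    have hbelow : ∀ x ∈ s, {y ∈ insert a s | y < x} = {y ∈ s | y < x} := fun x hx => by
      rw [filter_insert, if_neg (ha x hx).not_gt]
    have hbelow_a : {y ∈ insert a s | y < a} = s := by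
      rw [filter_insert, if_neg (lt_irrefl a), filter_true_of_mem ha]
    rw [filter_insert, hbelow_a, filter_congr fun x hx => by rw [hbelow x hx],
      card_insert_of_notMem ha']
    split_ifs with h
    · rw [card_insert_of_notMem fun hx => ha' (mem_filter.1 hx).1, ih]; omega
    · rw [ih]; omega

lemma Finset.card_le_card_biUnion_disjSum_range {ι α : Type*} [DecidableEq α] {𝒜 : Finset ι}
    {t : ι → Finset α} {d : ℕ} (h : ∀ S ⊆ 𝒜, #S ≤ #(S.biUnion t) + d) (s : Finset 𝒜) :
    #s ≤ #(s.biUnion fun i => (t i).disjSum (range d)) := by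
  obtain rfl | ⟨i₀, hi₀⟩ := s.eq_empty_or_nonempty
  · simp
  set S := s.map (Function.Embedding.subtype _)
  have hsub : (S.biUnion t).disjSum (range d) ⊆ s.biUnion fun i => (t i).disjSum (range d) := by
    rintro (a | b) hx
    · obtain ⟨_, hmem, ha⟩ := mem_biUnion.1 (inl_mem_disjSum.1 hx)
      obtain ⟨i, hi, rfl⟩ := mem_map.1 hmem
      exact mem_biUnion.2 ⟨i, hi, inl_mem_disjSum.2 ha⟩
    · exact mem_biUnion.2 ⟨i₀, hi₀, inr_mem_disjSum.2 (inr_mem_disjSum.1 hx)⟩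
  calc #s = #S := (card_map _).symm
    _ ≤ #(S.biUnion t) + d := h S fun i hi => by obtain ⟨i, -, rfl⟩ := mem_map.1 hi; exact i.2
    _ = #((S.biUnion t).disjSum (range d)) := by rw [card_disjSum, card_range]
    _ ≤ _ := card_le_card hsub

theorem Finset.exists_injOn_of_card_le_card_biUnion_add {ι α : Type*} [DecidableEq α]
    [Nonempty α] {𝒜 : Finset ι} {t : ι → Finset α} {d : ℕ}
    (h : ∀ S ⊆ 𝒜, #S ≤ #(S.biUnion t) + d) :
    ∃ s ⊆ 𝒜, #𝒜 - d ≤ #s ∧ ∃ f : ι → α, Set.InjOn f s ∧ ∀ i ∈ s, f i ∈ t i := by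
  classical
  -- Hall's theorem after adding `d` new vertices adjacent to everything on the right
  obtain ⟨g, hg_inj, hg⟩ := (all_card_le_biUnion_card_iff_exists_injective
    fun i : 𝒜 => (t i).disjSum (range d)).1 (card_le_card_biUnion_disjSum_range h)
  set matched := {i ∈ 𝒜.attach | (g i).isLeft}
  have hunmatched : #{i ∈ 𝒜.attach | ¬ (g i).isLeft} ≤ d := by
    calc _ ≤ #((∅ : Finset α).disjSum (range d)) :=
          card_le_card_of_injOn g (fun i hi => ?_) hg_inj.injOn
      _ = d := by simp
    have hgi := hg i
    replace hi := (mem_filter.1 (mem_coe.1 hi)).2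
    cases hgi' : g i with
    | inl a => simp [hgi'] at hi
    | inr b => rw [hgi'] at hgi; exact inr_mem_disjSum.2 (inr_mem_disjSum.1 hgi)
  let f : ι → α := fun i =>
    if hi : i ∈ 𝒜 then (g ⟨i, hi⟩).elim id fun _ => Classical.arbitrary α else Classical.arbitrary α
  have hf : ∀ i ∈ matched, g i = .inl (f i) := by
    intro i hi
    obtain ⟨a, ha⟩ := Sum.isLeft_iff.1 (mem_filter.1 hi).2
    simp [f, ha]
  refine ⟨matched.map (Function.Embedding.subtype _), fun i hi => ?_, ?_, f, ?_, ?_⟩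
  · obtain ⟨i, -, rfl⟩ := mem_map.1 hi; exact i.2
  · have := card_filter_add_card_filter_not (s := 𝒜.attach) (fun i => (g i).isLeft)
    rw [card_attach] at this
    change #matched + _ = _ at this
    rw [card_map]; omega
  · intro _ hmemi _ hmemj hij
    obtain ⟨i, hi, rfl⟩ := mem_map.1 hmemi
    obtain ⟨j, hj, rfl⟩ := mem_map.1 hmemj
    exact congrArg Subtype.val (hg_inj (by rw [hf i hi, hf j hj]; exact congrArg _ hij))
  · intro _ hmem
    obtain ⟨i, hi, rfl⟩ := mem_map.1 hmem
    have := hg i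
    rw [hf i hi] at this
    exact inl_mem_disjSum.1 this

lemma Finset.shadow_map {α β : Type*} [DecidableEq α] [DecidableEq β] (f : α ↪ β)
    (𝒜 : Finset (Finset α)) :
    ∂ (𝒜.map (mapEmbedding f).toEmbedding) = (∂ 𝒜).map (mapEmbedding f).toEmbedding := by
  ext B
  simp only [mem_shadow_iff, mem_map, RelEmbedding.coe_toEmbedding, mapEmbedding_apply]
  constructor
  · rintro ⟨_, ⟨A, hA, rfl⟩, y, hy, rfl⟩
    obtain ⟨x, hx, rfl⟩ := mem_map.1 hy
    exact ⟨A.erase x, ⟨A, hA, x, hx, rfl⟩, map_erase f A x⟩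
  · rintro ⟨_, ⟨A, hA, x, hx, rfl⟩, rfl⟩
    exact ⟨A.map f, ⟨A, hA, rfl⟩, f x, mem_map_of_mem f hx, (map_erase f A x).symm⟩

lemma Finset.biUnion_shadow_singleton {α : Type*} [DecidableEq α] (𝒜 : Finset (Finset α)) :
    𝒜.biUnion (fun A => ∂ {A}) = ∂ 𝒜 := by
  ext B
  simp [mem_shadow_iff]

lemma exists_eq_map_valEmbedding {N : ℕ} {𝒜 : Finset (Finset ℕ)} (h𝒜 : ∀ A ∈ 𝒜, A ⊆ range N) :
    ∃ 𝒜' : Finset (Finset (Fin N)), 𝒜 = 𝒜'.map (mapEmbedding Fin.valEmbedding).toEmbedding := by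
  obtain ⟨𝒜', -, h⟩ :=
    (subset_map_iff (f := (mapEmbedding Fin.valEmbedding).toEmbedding) (t := univ)).1 fun A hA =>
      mem_map.2 ⟨_, mem_univ _, map_valEmbedding_attachFin fun a ha => mem_range.1 (h𝒜 A hA ha)⟩
  exact ⟨𝒜', h⟩

theorem kruskal_katona_nat {𝒜 𝒞 : Finset (Finset ℕ)} {r : ℕ}
    (h𝒜r : (𝒜 : Set (Finset ℕ)).Sized r) (h𝒞𝒜 : #𝒞 ≤ #𝒜) (h𝒞 : Colex.IsInitSeg 𝒞 r) :
    #(∂ 𝒞) ≤ #(∂ 𝒜) := by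
  obtain ⟨N, hN⟩ := exists_nat_subset_range ((𝒜 ∪ 𝒞).sup id)
  have hbound : ∀ A ∈ 𝒜 ∪ 𝒞, A ⊆ range N := fun A hA => (le_sup (f := id) hA).trans hN
  obtain ⟨𝒜', rfl⟩ := exists_eq_map_valEmbedding fun A hA => hbound A (mem_union_left _ hA)
  obtain ⟨𝒞', rfl⟩ := exists_eq_map_valEmbedding fun A hA => hbound A (mem_union_right _ hA)
  rw [shadow_map, shadow_map, card_map, card_map]
  rw [card_map, card_map] at h𝒞𝒜
  refine kruskal_katona (r := r) (fun A hA => ?_) h𝒞𝒜 ⟨fun A hA => ?_, fun S T hS hST => ?_⟩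
  · simpa using h𝒜r (mem_map_of_mem _ hA)
  · simpa using h𝒞.1 (mem_map_of_mem _ hA)
  · obtain ⟨hTS, hT⟩ := hST
    have := h𝒞.2 (mem_map_of_mem _ hS) (t := T.map Fin.valEmbedding) ⟨?_, by simpa using hT⟩
    · exact (mem_map' _).1 this
    · simpa [map_eq_image, Colex.toColex_image_lt_toColex_image Fin.val_strictMono] using hTS

lemma colexSeg_eq (m t : ℕ) : colexSeg m t = {S ∈ (range (t + m)).powersetCard t |
      #{B ∈ (range (t + m)).powersetCard t | toColex B < toColex S} < m} := by
  simp only [colexSeg, powersetCard_eq_filter, filter_filter]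

theorem card_colexSeg (m t : ℕ) : #(colexSeg m t) = min m ((t + m).choose t) := by
  have h :=
    (((range (t + m)).powersetCard t).map toColex.toEmbedding).card_filter_card_filter_lt_lt m
  simpa only [filter_map, card_map, Function.comp_def, Equiv.coe_toEmbedding, card_powersetCard,
    card_range, ← colexSeg_eq] using h

lemma card_colexSeg_of_one_le {t : ℕ} (ht : 1 ≤ t) (m : ℕ) : #(colexSeg m t) = m := by
  rw [card_colexSeg, min_eq_left]
  calc m ≤ (m + 1).choose m := by rw [Nat.choose_succ_self_right]; omega
    _ ≤ (t + m).choose m := Nat.choose_le_choose m (by omega)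
    _ = (t + m).choose t := Nat.choose_symm_add.symm

lemma isInitSeg_colexSeg (m t : ℕ) : Colex.IsInitSeg (colexSeg m t) t := by
  refine ⟨fun S hS => ?_, fun S T hS ⟨hTS, hT⟩ => ?_⟩
  · rw [colexSeg_eq, mem_coe, mem_filter, mem_powersetCard] at hS
    exact hS.1.2
  rw [colexSeg_eq, mem_filter, mem_powersetCard] at hS ⊢
  obtain ⟨⟨hS, -⟩, hSm⟩ := hS
  refine ⟨⟨fun b hb => mem_range.2
    (Colex.forall_lt_mono hTS.le (fun a ha => mem_range.1 (hS ha)) b hb), hT⟩, ?_⟩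
  exact (card_le_card (monotone_filter_right _ fun B _ hB => hB.trans hTS)).trans_lt hSm

lemma colexSeg_mono {t : ℕ} (ht : 1 ≤ t) {s m : ℕ} (hsm : s ≤ m) :
    colexSeg s t ⊆ colexSeg m t := by
  obtain h | h := (isInitSeg_colexSeg s t).total (isInitSeg_colexSeg m t)
  · exact h
  · exact (eq_of_subset_of_card_le h (by simp only [card_colexSeg_of_one_le ht, hsm])).ge

lemma card_le_nu {𝒜 s : Finset (Finset ℕ)} (hs : s ⊆ 𝒜) {f : Finset ℕ → Finset ℕ}
    (hf : Set.InjOn f s) (hf𝒜 : ∀ a ∈ s, f a ∈ ∂ 𝒜 ∧ f a ⊆ a) : #s ≤ nu 𝒜 :=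
  le_csSup ⟨#𝒜, fun _ ⟨_, hs, hm, _⟩ => hm ▸ card_le_card hs⟩ ⟨s, hs, rfl, f, hf, hf𝒜⟩

lemma nu_le_of_forall {𝒜 : Finset (Finset ℕ)} {k : ℕ}
    (h : ∀ s ⊆ 𝒜, ∀ f : Finset ℕ → Finset ℕ, Set.InjOn f s → (∀ a ∈ s, f a ∈ ∂ 𝒜 ∧ f a ⊆ a) →
      #s ≤ k) : nu 𝒜 ≤ k :=
  csSup_le ⟨0, ∅, empty_subset _, rfl, id, by simp, by simp⟩
    fun _ ⟨s, hs, hm, f, hf, hf𝒜⟩ => hm ▸ h s hs f hf hf𝒜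

lemma nu_le_card (𝒜 : Finset (Finset ℕ)) : nu 𝒜 ≤ #𝒜 :=
  nu_le_of_forall fun _ hs _ _ _ => card_le_card hs

lemma nu_le_card_sub_add_card_shadow {𝒜 : Finset (Finset ℕ)} {r : ℕ}
    (h𝒜 : (𝒜 : Set (Finset ℕ)).Sized r)
    {S : Finset (Finset ℕ)} (hS : S ⊆ 𝒜) : nu 𝒜 ≤ #𝒜 - #S + #(∂ S) := by
  refine nu_le_of_forall fun s hs f hf hf𝒜 => ?_
  have hmaps : Set.MapsTo f ↑(s ∩ S) ↑(∂ S) := fun a ha => by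
    rw [mem_coe, mem_inter] at ha
    obtain ⟨hfa, hfa_sub⟩ := hf𝒜 a ha.1
    obtain ⟨B, hB, -, hcard⟩ := mem_shadow_iff_exists_mem_card_add_one.1 hfa
    rw [h𝒜 hB, ← h𝒜 (hs ha.1)] at hcard
    exact mem_shadow_iff_exists_mem_card_add_one.2 ⟨a, ha.2, hfa_sub, hcard⟩
  calc #s = #(s \ S) + #(s ∩ S) := (card_sdiff_add_card_inter s S).symm
    _ ≤ #(𝒜 \ S) + #(∂ S) := add_le_add (card_le_card (sdiff_subset_sdiff hs le_rfl))
        (card_le_card_of_injOn f hmaps (hf.mono (by simp)))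
    _ = #𝒜 - #S + #(∂ S) := by rw [card_sdiff_of_subset hS]

lemma exists_subset_card_sub_le_nu (𝒜 : Finset (Finset ℕ)) :
    ∃ S ⊆ 𝒜, #𝒜 - (#S - #(∂ S)) ≤ nu 𝒜 := by
  obtain ⟨S, hS, hmax⟩ :=
    𝒜.powerset.exists_max_image (fun S => #S - #(∂ S)) ⟨∅, empty_mem_powerset _⟩
  obtain ⟨s, hs, hcard, f, hf, hfs⟩ := exists_injOn_of_card_le_card_biUnion_add
    (t := fun A => ∂ {A}) (d := #S - #(∂ S)) fun T hT => by
      have := hmax T (mem_powerset.2 hT)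
      rw [biUnion_shadow_singleton]; omega
  refine ⟨S, mem_powerset.1 hS, hcard.trans (card_le_nu hs hf fun a ha => ⟨?_, ?_⟩)⟩
  · exact shadow_mono (singleton_subset_iff.2 (hs ha)) (hfs a ha)
  · obtain ⟨_, hb, hsub⟩ := exists_subset_of_mem_shadow (hfs a ha)
    exact mem_singleton.1 hb ▸ hsub

theorem stmt3_general (n t : ℕ) (ht : 1 ≤ t) (ℬ : Finset (Finset ℕ))
    (hB : ∀ A ∈ ℬ, A ⊆ Finset.range n ∧ A.card = t) :
    nu (colexSeg ℬ.card t) ≤ nu ℬ := by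
  have hℬ : (ℬ : Set (Finset ℕ)).Sized t := fun A hA => (hB A hA).2
  have h𝒞 := (isInitSeg_colexSeg #ℬ t).1
  obtain ⟨S, hSℬ, hνℬ⟩ := exists_subset_card_sub_le_nu ℬ
  have hkk : #(∂ (colexSeg #S t)) ≤ #(∂ S) :=
    kruskal_katona_nat (hℬ.mono hSℬ) (card_colexSeg_of_one_le ht _).le (isInitSeg_colexSeg _ t)
  have hcard := card_le_card hSℬ
  have hν𝒞 := nu_le_card_sub_add_card_shadow h𝒞 (colexSeg_mono ht hcard)
  have hν𝒞_le_card := nu_le_card (colexSeg #ℬ t)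
  rw [card_colexSeg_of_one_le ht, card_colexSeg_of_one_le ht] at hν𝒞
  rw [card_colexSeg_of_one_le ht] at hν𝒞_le_card
  omega

/-- The initial segment of colex minimises the matching number to the shadow among
families of `t`-sets of the same size. -/
theorem stmt3 (n t : ℕ) (ht : 1 ≤ t) (htn : t ≤ n) (ℬ : Finset (Finset ℕ))
    (hB : ∀ A ∈ ℬ, A ⊆ Finset.range n ∧ A.card = t) :
    nu (colexSeg ℬ.card t) ≤ nu ℬ :=
  stmt3_general n t ht ℬ hB
end

section
/- Every positive integer m can be written uniquely in r-cascade notation: m = C(a_r, r) + C(a_{r-1}, r-1) + ... + C(a_s, s), where r ≥ s ≥ 1, a_r > a_{r-1} > ... > a_s > 0 and a_i ≥ i for all i in [s, r]. -/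
/-!
Existence is the greedy algorithm: take the largest `A` with `C(A, r) ≤ m`. Pascal's rule
`C(A + 1, r) = C(A, r - 1) + C(A, r)` leaves a remainder `m - C(A, r) < C(A, r - 1)`, so an
`(r - 1)`-cascade of the remainder has top entry below `A`. Uniqueness rests on the same rule:
by induction every cascade satisfies `C(a_r, r) ≤ m < C(a_r + 1, r)`, which determines `a_r`;
the remainder then vanishes exactly when `s = r`, and otherwise has a unique `(r - 1)`-cascade.
-/

open Finset

structure IsCascade (r s : ℕ) (a : ℕ → ℕ) : Prop where
  one_le : 1 ≤ s
  le_top : s ≤ r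
  le_apply : ∀ i ∈ Icc s r, i ≤ a i
  strictMonoOn : StrictMonoOn a (Icc s r : Set ℕ)

namespace IsCascade

variable {r s : ℕ} {a : ℕ → ℕ}

lemma restrict (h : IsCascade (r + 1) s a) (hs : s ≤ r) : IsCascade r s a where
  one_le := h.one_le
  le_top := hs
  le_apply i hi := h.le_apply i (Icc_subset_Icc_right r.le_succ hi)
  strictMonoOn := h.strictMonoOn.mono (by exact_mod_cast Icc_subset_Icc_right r.le_succ)

lemma extend (h : IsCascade r s a) {A : ℕ} (hA : a r < A) :
    IsCascade (r + 1) s (Function.update a (r + 1) A) where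
  one_le := h.one_le
  le_top := Nat.le_succ_of_le h.le_top
  le_apply i hi := by
    rcases eq_or_ne i (r + 1) with rfl | hi'
    · rw [Function.update_self]
      have := h.le_apply r (by simp [h.le_top])
      omega
    · rw [Function.update_of_ne hi']
      exact h.le_apply i (by simp only [mem_Icc] at hi ⊢; omega)
  strictMonoOn i hi j hj hij := by
    simp only [coe_Icc, Set.mem_Icc] at hi hj
    have mem {k : ℕ} (h₁ : s ≤ k) (h₂ : k ≤ r) : k ∈ (Icc s r : Set ℕ) := by simp [h₁, h₂]
    rw [Function.update_of_ne (by omega : i ≠ r + 1)]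
    rcases eq_or_ne j (r + 1) with rfl | hj'
    · rw [Function.update_self]
      exact (h.strictMonoOn.monotoneOn (mem hi.1 (by omega)) (mem h.le_top le_rfl)
        (by omega)).trans_lt hA
    · rw [Function.update_of_ne hj']
      exact h.strictMonoOn (mem hi.1 (by omega)) (mem hj.1 (by omega)) hij

lemma choose_le_sum (h : IsCascade r s a) : (a r).choose r ≤ ∑ i ∈ Icc s r, (a i).choose i :=
  single_le_sum (f := fun i => (a i).choose i) (fun _ _ => Nat.zero_le _) (by simp [h.le_top])

lemma sum_pos (h : IsCascade r s a) : 0 < ∑ i ∈ Icc s r, (a i).choose i :=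
  lt_of_lt_of_le (Nat.choose_pos (h.le_apply r (by simp [h.le_top]))) h.choose_le_sum

lemma sum_pos_iff (h : IsCascade (r + 1) s a) :
    0 < ∑ i ∈ Icc s r, (a i).choose i ↔ s ≤ r := by
  refine ⟨fun hpos => ?_, fun hs => (h.restrict hs).sum_pos⟩
  by_contra! hs
  simp [Icc_eq_empty_of_lt hs] at hpos

lemma sum_lt_choose_succ (h : IsCascade r s a) :
    ∑ i ∈ Icc s r, (a i).choose i < (a r + 1).choose r := by
  induction r with
  | zero => exact absurd h.le_top (by have := h.one_le; omega)
  | succ r ih =>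
    have htop : r + 1 ≤ a (r + 1) := h.le_apply (r + 1) (by simp [h.le_top])
    have htail : ∑ i ∈ Icc s r, (a i).choose i < (a (r + 1)).choose r := by
      rcases Nat.lt_or_ge r s with hs | hs
      · rw [Icc_eq_empty_of_lt hs, sum_empty]
        exact Nat.choose_pos (by omega)
      · have hlt : a r < a (r + 1) :=
          h.strictMonoOn (by simp [hs]) (by simp [h.le_top]) r.lt_succ_self
        exact lt_of_lt_of_le (ih (h.restrict hs)) (Nat.choose_le_choose r hlt)
    rw [sum_Icc_succ_top h.le_top, Nat.choose_succ_succ']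
    omega

end IsCascade

lemma Nat.exists_choose_le_lt_choose_succ {k m : ℕ} (hk : 1 ≤ k) (hm : 1 ≤ m) :
    ∃ A, k ≤ A ∧ A.choose k ≤ m ∧ m < (A + 1).choose k := by
  have hex : ∃ x : ℕ, m < x.choose k := ⟨m + k, by
    rw [← Nat.choose_symm_add]
    calc m < (m + 1).choose m := by rw [Nat.choose_succ_self_right]; omega
      _ ≤ (m + k).choose m := Nat.choose_le_choose m (by omega)⟩
  classical
  have hkn : k < Nat.find hex := by
    by_contra! hle
    have := Nat.find_spec hex
    rcases hle.lt_or_eq with hlt | heq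
    · rw [Nat.choose_eq_zero_of_lt hlt] at this; omega
    · rw [heq, Nat.choose_self] at this; omega
  refine ⟨Nat.find hex - 1, by omega, ?_, ?_⟩
  · exact not_lt.mp (Nat.find_min hex (by omega))
  · rw [Nat.sub_add_cancel (by omega)]; exact Nat.find_spec hex

theorem exists_isCascade {r m : ℕ} (hr : 1 ≤ r) (hm : 0 < m) :
    ∃ s a, IsCascade r s a ∧ m = ∑ i ∈ Icc s r, (a i).choose i := by
  induction r generalizing m with
  | zero => omega
  | succ r ih =>
    obtain ⟨A, hrA, hAm, hmA⟩ := Nat.exists_choose_le_lt_choose_succ hr hm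
    rw [Nat.choose_succ_succ'] at hmA
    rcases Nat.eq_zero_or_pos (m - A.choose (r + 1)) with hrem | hrem
    · refine ⟨r + 1, fun _ => A, ⟨hr, le_rfl, by simpa using hrA, by simp⟩, ?_⟩
      simp only [Icc_self, sum_singleton]
      omega
    · have hr' : 1 ≤ r := Nat.one_le_iff_ne_zero.mpr <| by
        rintro rfl
        rw [Nat.choose_zero_right] at hmA
        omega
      obtain ⟨s, a, ha, hsum⟩ := ih hr' hrem
      have haA : a r < A := (Nat.choose_mono r).reflect_lt <| by
        have := ha.choose_le_sum; omega
      refine ⟨s, Function.update a (r + 1) A, ha.extend haA, ?_⟩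
      rw [sum_Icc_succ_top (Nat.le_succ_of_le ha.le_top), Function.update_self,
        sum_congr rfl fun i hi => by
          rw [Function.update_of_ne (by rw [mem_Icc] at hi; omega)]]
      omega

theorem IsCascade.unique {r s s' : ℕ} {a a' : ℕ → ℕ} (h : IsCascade r s a)
    (h' : IsCascade r s' a')
    (hsum : ∑ i ∈ Icc s r, (a i).choose i = ∑ i ∈ Icc s' r, (a' i).choose i) :
    s = s' ∧ ∀ i ∈ Icc s r, a i = a' i := by
  induction r with
  | zero => exact absurd h.le_top (by have := h.one_le; omega)
  | succ r ih =>
    have htop : a (r + 1) = a' (r + 1) := by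
      have h₁ := (Nat.choose_mono _).reflect_lt
        (h.choose_le_sum.trans_lt (hsum ▸ h'.sum_lt_choose_succ))
      have h₂ := (Nat.choose_mono _).reflect_lt
        (h'.choose_le_sum.trans_lt (hsum ▸ h.sum_lt_choose_succ))
      omega
    rw [sum_Icc_succ_top h.le_top, sum_Icc_succ_top h'.le_top, htop, Nat.add_right_cancel_iff]
      at hsum
    have hss : s = s' := by
      by_cases hs : s ≤ r
      · have hs' : s' ≤ r := h'.sum_pos_iff.mp (hsum ▸ h.sum_pos_iff.mpr hs)
        exact (ih (h.restrict hs) (h'.restrict hs') hsum).1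
      · have hs' : ¬ s' ≤ r := fun hs' =>
          hs (h.sum_pos_iff.mp (hsum ▸ h'.sum_pos_iff.mpr hs'))
        have := h.le_top; have := h'.le_top
        omega
    refine ⟨hss, fun i hi => ?_⟩
    rcases eq_or_ne i (r + 1) with rfl | hir
    · exact htop
    · rw [mem_Icc] at hi
      have hsr : s ≤ r := by omega
      exact (ih (h.restrict hsr) (h'.restrict (hss ▸ hsr)) hsum).2 i
        (mem_Icc.mpr ⟨hi.1, by omega⟩)

/-- Existence and uniqueness of the `r`-cascade notation
`m = C(a_r, r) + ⋯ + C(a_s, s)` with `r ≥ s ≥ 1`, `a_r > ⋯ > a_s > 0`, `a_i ≥ i`. -/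
theorem stmt5 (m r : ℕ) (hm : 0 < m) (hr : 1 ≤ r) :
    ∃ (s : ℕ) (a : ℕ → ℕ),
      (1 ≤ s ∧ s ≤ r ∧ 0 < a s ∧ (∀ i ∈ Finset.Icc s r, i ≤ a i) ∧
        (∀ i ∈ Finset.Icc s r, ∀ j ∈ Finset.Icc s r, i < j → a i < a j) ∧
        m = ∑ i ∈ Finset.Icc s r, Nat.choose (a i) i) ∧
      ∀ (s' : ℕ) (a' : ℕ → ℕ),
        (1 ≤ s' ∧ s' ≤ r ∧ 0 < a' s' ∧ (∀ i ∈ Finset.Icc s' r, i ≤ a' i) ∧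
          (∀ i ∈ Finset.Icc s' r, ∀ j ∈ Finset.Icc s' r, i < j → a' i < a' j) ∧
          m = ∑ i ∈ Finset.Icc s' r, Nat.choose (a' i) i) →
        s' = s ∧ ∀ i ∈ Finset.Icc s r, a' i = a i := by
  obtain ⟨s, a, ha, hsum⟩ := exists_isCascade hr hm
  refine ⟨s, a, ⟨ha.one_le, ha.le_top, ?_, ha.le_apply, ha.strictMonoOn, hsum⟩, ?_⟩
  · exact Nat.lt_of_lt_of_le ha.one_le (ha.le_apply s (by simp [ha.le_top]))
  · rintro s' a' ⟨hs', hs'r, -, hle', hmono', hsum'⟩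
    obtain ⟨hss, heq⟩ :=
      IsCascade.unique ⟨hs', hs'r, hle', hmono'⟩ ha (hsum'.symm.trans hsum)
    exact ⟨hss, hss ▸ heq⟩
end

section
/- Let 3 ≤ r ≤ n, let C^1, ..., C^{m-1} be pairwise disjoint skipless chains in 2^[n], each starting in layer r-2 and ending in layer r. Let B ⊆ [n] with |B| = r and let A ⊆ B with |A| ≤ r - 2, with A, B not in any C^i. Then there exist m pairwise disjoint chains D^1, ..., D^m such that: for i ≤ m-1, D^i is skipless, starts in layer r-2 and ends in layer r; D^m starts at A and contains a set of size r-1 and a set of size r; and the union of the D^i covers the union of the C^i together with A and B. -/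
/-! Every old chain is a triple `Lᵢ ⊂ Mᵢ ⊂ Tᵢ` in layers `r-2, r-1, r`. Shifting tops along a
path that starts at `B` (chain `i` may take a top `X` when `Mᵢ ⊆ X`) frees one old top `X`;
shifting bottoms along a path from `A` frees one old bottom `Y` and puts `A` under some chain.
If an `(r-1)`-set `μ` that is no old middle satisfies `Y ⊆ μ ⊆ X` for such reachable `X, Y`,
then `Y ⊂ μ ⊂ X` is an additional chain, and the chain that received `A`, moved to the last
index, is `Dᵐ`.

Such a `μ` exists by double counting. Otherwise every such `μ` is an old middle `Mᵢ`, and then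
chain `i` has a reachable bottom and top; let `S` be the set of these chains. Every top `Tₕ`
(`h ∈ S`) contains, besides `Mₕ`, one middle `Lᵢ ∪ (Tₕ \ Mₕ)` for each bottom `Lᵢ ⊆ Mₕ`, and
`B` contains at least one middle; every middle `Mᵢ` lies under fewer reachable tops than there
are middles over `Lᵢ`. Summing both inequalities over `S`, the two double counts of middle–top
and bottom–middle incidences give `N ≥ N + 1 + 2|S|`. -/

namespace ChainReroute

open Function

lemma _root_.Set.BijOn.update_insert {ι α : Type*} [DecidableEq ι] {f : ι → α} {s : Set ι}
    {t : Set α} {o : ι} {y : α} (hf : Set.BijOn f s (t \ {y})) (ho : o ∉ s) (hy : y ∈ t) :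
    Set.BijOn (update f o y) (insert o s) t := by
  have hf' : Set.BijOn (update f o y) s (t \ {y}) :=
    hf.congr fun i hi => (update_of_ne (ne_of_mem_of_not_mem hi ho) y f).symm
  simpa [Set.insert_eq_of_mem hy] using hf'.insert (a := o) (by simp)

lemma _root_.Finset.card_le_card_of_forall_exists_eq {ι κ β : Type*} [DecidableEq β]
    {s : Finset κ} {t : Finset ι} {φ : κ → β} {f : ι → β} (hφ : Set.InjOn φ s)
    (h : ∀ x ∈ s, ∃ y ∈ t, f y = φ x) : s.card ≤ t.card :=
  calc s.card = (s.image φ).card := (Finset.card_image_of_injOn hφ).symm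
    _ ≤ (t.image f).card := Finset.card_le_card fun _ hz => by
      obtain ⟨x, hx, rfl⟩ := Finset.mem_image.1 hz
      obtain ⟨y, hy, hxy⟩ := h x hx
      exact Finset.mem_image.2 ⟨y, hy, hxy⟩
    _ ≤ t.card := Finset.card_image_le

section ShiftPath

open Set

variable {ι α : Type*} (R : ι → α → Prop) (T : ι → α) (b : α) (s : Set ι)

def freedSlot : List ι → α
  | [] => b
  | i :: _ => T i

/-- `i₁ :: … :: iₖ` is a shift path if `iₖ` may move to the free slot `b` and each `iⱼ` may
move to the slot `T iⱼ₊₁` of its successor; shifting all of them frees `T i₁`. -/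
def IsShiftPath : List ι → Prop
  | [] => True
  | i :: l => i ∈ s ∧ R i (freedSlot T b l) ∧ IsShiftPath l

def ShiftReachable (y : α) : Prop :=
  ∃ l, IsShiftPath R T b s l ∧ freedSlot T b l = y

variable {R T b s}

lemma IsShiftPath.of_append {u v : List ι} (h : IsShiftPath R T b s (u ++ v)) :
    IsShiftPath R T b s v := by
  induction u with
  | nil => exact h
  | cons i u ih => exact ih h.2.2

lemma IsShiftPath.mem {l : List ι} (h : IsShiftPath R T b s l) {i : ι} (hi : i ∈ l) : i ∈ s := by
  induction l with
  | nil => simp at hi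
  | cons j l ih =>
    rcases List.mem_cons.1 hi with rfl | hi
    exacts [h.1, ih h.2.2 hi]

lemma freedSlot_eq_or (l : List ι) : freedSlot T b l = b ∨ ∃ i ∈ l, freedSlot T b l = T i := by
  cases l with
  | nil => exact Or.inl rfl
  | cons i l => exact Or.inr ⟨i, List.mem_cons_self, rfl⟩

lemma IsShiftPath.freedSlot_mem {l : List ι} (hl : IsShiftPath R T b s l) :
    freedSlot T b l ∈ insert b (T '' s) := by
  rcases freedSlot_eq_or (T := T) (b := b) l with h | ⟨j, hj, h⟩
  · exact Or.inl h
  · exact Or.inr ⟨j, hl.mem hj, h.symm⟩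

lemma IsShiftPath.apply_ne_freedSlot (hT : InjOn T s) (hb : b ∉ T '' s) {l : List ι}
    (hl : IsShiftPath R T b s l) {i : ι} (hi : i ∈ s) (hil : i ∉ l) : T i ≠ freedSlot T b l := by
  rcases freedSlot_eq_or (T := T) (b := b) l with h | ⟨j, hj, h⟩ <;> rw [h]
  · exact fun h' => hb ⟨i, hi, h'⟩
  · exact fun h' => hil (hT hi (hl.mem hj) h' ▸ hj)

theorem IsShiftPath.exists_bijOn [DecidableEq α] (hT : InjOn T s) (hb : b ∉ T '' s)
    (hRT : ∀ i ∈ s, R i (T i)) :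
    ∀ l, IsShiftPath R T b s l → ∃ τ : ι → α, (∀ i ∈ s, R i (τ i)) ∧
      BijOn τ s (insert b (T '' s) \ {freedSlot T b l}) ∧ ∀ i ∈ s, i ∉ l → τ i = T i
  | [], _ => by
    refine ⟨T, hRT, ?_, fun _ _ _ => rfl⟩
    rw [freedSlot, insert_sdiff_self_of_notMem hb]
    exact hT.bijOn_image
  | i :: l, ⟨hi, hRi, hl⟩ => by
    by_cases hil : i ∈ l
    · -- a repeated index: the suffix starting at its second occurrence frees the same slot
      obtain ⟨u, w, rfl⟩ := List.append_of_mem hil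
      obtain ⟨τ, hR, hbij, hfix⟩ := exists_bijOn hT hb hRT (i :: w) hl.of_append
      exact ⟨τ, hR, hbij, fun k hk hkl => hfix k hk (by simp_all)⟩
    obtain ⟨τ, hR, hbij, hfix⟩ := exists_bijOn hT hb hRT l hl
    -- chain `i`, still in its own slot `T i`, moves to the free slot `y`
    set y := freedSlot T b l
    have hiy : T i ≠ y := hl.apply_ne_freedSlot hT hb hi hil
    have hτi : τ i = T i := hfix i hi hil
    have hswap : ∀ k ∈ s, k ≠ i → Equiv.swap y (T i) (τ k) = τ k := by
      intro k hk hki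
      refine Equiv.swap_apply_of_ne_of_ne (fun h => (hbij.mapsTo hk).2 h) fun h => hki ?_
      exact hbij.injOn hk hi (h.trans hτi.symm)
    refine ⟨Equiv.swap y (T i) ∘ τ, fun k hk => ?_, ?_, fun k hk hkl => ?_⟩
    · rcases eq_or_ne k i with rfl | hki
      · simpa [hτi] using hRi
      · simpa [hswap k hk hki] using hR k hk
    · refine BijOn.comp ((Equiv.swap y (T i)).bijOn fun z => ?_) hbij
      simp only [mem_sdiff, mem_singleton_iff, freedSlot]
      rcases eq_or_ne z y with rfl | hzy
      · simp
      rcases eq_or_ne z (T i) with rfl | hzi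
      · rw [Equiv.swap_apply_right]
        exact ⟨fun _ => ⟨Or.inr ⟨i, hi, rfl⟩, hiy⟩, fun _ => ⟨hl.freedSlot_mem, hiy.symm⟩⟩
      · rw [Equiv.swap_apply_of_ne_of_ne hzy hzi]
        exact and_congr_right fun _ => ⟨fun _ => hzy, fun _ => hzi⟩
    · simp only [List.mem_cons, not_or] at hkl
      rw [comp_apply, hfix k hk hkl.2]
      exact Equiv.swap_apply_of_ne_of_ne (hl.apply_ne_freedSlot hT hb hk hkl.2)
        fun h => hkl.1 (hT hk hi h)
termination_by l => l.length

lemma ShiftReachable.refl : ShiftReachable R T b s b := ⟨[], trivial, rfl⟩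

lemma ShiftReachable.step {y : α} (hy : ShiftReachable R T b s y) {i : ι} (hi : i ∈ s)
    (hR : R i y) : ShiftReachable R T b s (T i) := by
  obtain ⟨l, hl, rfl⟩ := hy
  exact ⟨i :: l, ⟨hi, hR, hl⟩, rfl⟩

lemma ShiftReachable.mem_insert_image {y : α} (hy : ShiftReachable R T b s y) :
    y ∈ insert b (T '' s) := by
  obtain ⟨l, hl, rfl⟩ := hy
  exact hl.freedSlot_mem

theorem ShiftReachable.exists_bijOn [DecidableEq α] (hT : InjOn T s) (hb : b ∉ T '' s)
    (hRT : ∀ i ∈ s, R i (T i)) {y : α} (hy : ShiftReachable R T b s y) :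
    ∃ τ : ι → α, (∀ i ∈ s, R i (τ i)) ∧ BijOn τ s (insert b (T '' s) \ {y}) := by
  obtain ⟨l, hl, rfl⟩ := hy
  obtain ⟨τ, hR, hbij, -⟩ := IsShiftPath.exists_bijOn hT hb hRT l hl
  exact ⟨τ, hR, hbij⟩

end ShiftPath

open Finset

variable {ι α : Type*} [DecidableEq α]

section OtherMiddle

variable {L M X : Finset α}

/-- For `L ⊆ M ⊆ X` with `|X \ L| = 2`, the member of the interval `[L, X]` of size `|M|`
other than `M`. -/
def otherMiddle (L M X : Finset α) : Finset α := L ∪ (X \ M)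

lemma subset_otherMiddle : L ⊆ otherMiddle L M X := subset_union_left

lemma otherMiddle_subset (hLX : L ⊆ X) : otherMiddle L M X ⊆ X :=
  union_subset hLX sdiff_subset

lemma card_otherMiddle (hLM : L ⊆ M) (hMX : M ⊆ X) (hL : #L + 1 = #M) (hM : #M + 1 = #X) :
    #(otherMiddle L M X) = #M := by
  have hdisj : Disjoint L (X \ M) := disjoint_sdiff.mono_left hLM
  rw [otherMiddle, card_union_of_disjoint hdisj, card_sdiff_of_subset hMX]
  omega

lemma otherMiddle_ne (hMX : M ⊆ X) (hM : #M < #X) : otherMiddle L M X ≠ M := by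
  obtain ⟨x, hx⟩ : (X \ M).Nonempty := by
    rw [← card_pos, card_sdiff_of_subset hMX]
    omega
  exact fun h => (mem_sdiff.1 hx).2 (h ▸ mem_union_right L hx)

lemma otherMiddle_inter (hLM : L ⊆ M) : otherMiddle L M X ∩ M = L := by
  ext x
  simp only [otherMiddle, mem_inter, mem_union, mem_sdiff]
  constructor
  · rintro ⟨hx | hx, hxM⟩
    exacts [hx, absurd hxM hx.2]
  · exact fun hx => ⟨Or.inl hx, hLM hx⟩

lemma otherMiddle_union (hLM : L ⊆ M) (hMX : M ⊆ X) : otherMiddle L M X ∪ M = X := by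
  rw [otherMiddle, union_right_comm, union_eq_right.2 hLM, union_sdiff_of_subset hMX]

end OtherMiddle

variable {S : Finset ι} {L M T : ι → Finset α} {A B : Finset α} {k : ℕ}

def MiddlesClosed (S : Finset ι) (L M T : ι → Finset α) (A B : Finset α) (k : ℕ) : Prop :=
  ∀ μ : Finset α, #μ = k → (∃ X ∈ insert B (S.image T), μ ⊆ X) →
    (∃ Y ∈ insert A (S.image L), Y ⊆ μ) → ∃ g ∈ S, M g = μ

lemma MiddlesClosed.card_bots_below_lt_card_mids_below (hcl : MiddlesClosed S L M T A B k)
    (hL : ∀ i ∈ S, #(L i) + 1 = k) (hM : ∀ i ∈ S, #(M i) = k) (hT : ∀ i ∈ S, #(T i) = k + 1)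
    (hMT : ∀ i ∈ S, M i ⊆ T i) (hLinj : Set.InjOn L S) {h : ι} (hh : h ∈ S) :
    #{i ∈ S | L i ⊆ M h} < #{g ∈ S | M g ⊆ T h} := by
  classical
  have hmem : h ∈ {g ∈ S | M g ⊆ T h} := mem_filter.2 ⟨hh, hMT h hh⟩
  refine lt_of_le_of_lt ?_ (card_erase_lt_of_mem hmem)
  refine card_le_card_of_forall_exists_eq (φ := fun i => otherMiddle (L i) (M h) (T h))
    (f := M) (fun i hi i' hi' he => ?_) fun i hi => ?_
  · rw [mem_coe, mem_filter] at hi hi'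
    apply hLinj hi.1 hi'.1
    simpa only [otherMiddle_inter hi.2, otherMiddle_inter hi'.2] using congrArg (· ∩ M h) he
  · obtain ⟨hiS, hLi⟩ := mem_filter.1 hi
    have hcard : #(otherMiddle (L i) (M h) (T h)) = k := by
      rw [card_otherMiddle hLi (hMT h hh) (by rw [hL i hiS, hM h hh]) (by rw [hM h hh, hT h hh]),
        hM h hh]
    have hsub := otherMiddle_subset (M := M h) (hLi.trans (hMT h hh))
    obtain ⟨g, hg, hMg⟩ := hcl _ hcard ⟨T h, mem_insert_of_mem (mem_image_of_mem T hh), hsub⟩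
      ⟨L i, mem_insert_of_mem (mem_image_of_mem L hiS), subset_otherMiddle⟩
    refine ⟨g, mem_erase.2 ⟨?_, mem_filter.2 ⟨hg, hMg ▸ hsub⟩⟩, hMg⟩
    rintro rfl
    exact otherMiddle_ne (hMT g hh) (by rw [hM g hh, hT g hh]; omega) hMg.symm

lemma MiddlesClosed.card_tops_above_lt_card_mids_above (hcl : MiddlesClosed S L M T A B k)
    (hL : ∀ i ∈ S, #(L i) + 1 = k) (hM : ∀ i ∈ S, #(M i) = k) (hT : ∀ i ∈ S, #(T i) = k + 1)
    (hB : #B = k + 1) (hLM : ∀ i ∈ S, L i ⊆ M i) {i : ι} (hi : i ∈ S) :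
    #{X ∈ insert B (S.image T) | M i ⊆ X} < #{h ∈ S | L i ⊆ M h} := by
  classical
  have hmem : i ∈ {h ∈ S | L i ⊆ M h} := mem_filter.2 ⟨hi, hLM i hi⟩
  refine lt_of_le_of_lt ?_ (card_erase_lt_of_mem hmem)
  refine card_le_card_of_forall_exists_eq (φ := fun X => otherMiddle (L i) (M i) X)
    (f := M) (fun X hX X' hX' he => ?_) fun X hX => ?_
  · rw [mem_coe, mem_filter] at hX hX'
    simpa only [otherMiddle_union (hLM i hi) hX.2, otherMiddle_union (hLM i hi) hX'.2]
      using congrArg (· ∪ M i) he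
  · obtain ⟨hX𝒳, hMX⟩ := mem_filter.1 hX
    have hXcard : #X = k + 1 := by
      rcases mem_insert.1 hX𝒳 with rfl | hX
      · exact hB
      · obtain ⟨h, hh, rfl⟩ := mem_image.1 hX
        exact hT h hh
    have hcard : #(otherMiddle (L i) (M i) X) = k := by
      rw [card_otherMiddle (hLM i hi) hMX (by rw [hL i hi, hM i hi]) (by rw [hM i hi, hXcard]),
        hM i hi]
    obtain ⟨g, hg, hMg⟩ := hcl _ hcard ⟨X, hX𝒳, otherMiddle_subset ((hLM i hi).trans hMX)⟩
      ⟨L i, mem_insert_of_mem (mem_image_of_mem L hi), subset_otherMiddle⟩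
    refine ⟨g, mem_erase.2 ⟨?_, mem_filter.2 ⟨hg, hMg ▸ subset_otherMiddle⟩⟩, hMg⟩
    rintro rfl
    exact otherMiddle_ne hMX (by rw [hM g hi, hXcard]; omega) hMg.symm

lemma MiddlesClosed.card_mids_below_pos (hcl : MiddlesClosed S L M T A B k) (hA : #A < k)
    (hB : #B = k + 1) (hAB : A ⊆ B) : 0 < #{g ∈ S | M g ⊆ B} := by
  obtain ⟨x, hx⟩ : (B \ A).Nonempty := by
    rw [← card_pos, card_sdiff_of_subset hAB]
    omega
  obtain ⟨hxB, hxA⟩ := mem_sdiff.1 hx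
  obtain ⟨g, hg, hMg⟩ := hcl (B.erase x) (by rw [card_erase_of_mem hxB, hB]; rfl)
    ⟨B, mem_insert_self _ _, erase_subset x B⟩
    ⟨A, mem_insert_self _ _, fun a ha => mem_erase.2 ⟨fun h => hxA (h ▸ ha), hAB ha⟩⟩
  exact card_pos.2 ⟨g, mem_filter.2 ⟨hg, hMg ▸ erase_subset x B⟩⟩

theorem not_middlesClosed (hL : ∀ i ∈ S, #(L i) + 1 = k) (hM : ∀ i ∈ S, #(M i) = k)
    (hT : ∀ i ∈ S, #(T i) = k + 1) (hLM : ∀ i ∈ S, L i ⊆ M i) (hMT : ∀ i ∈ S, M i ⊆ T i)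
    (hLinj : Set.InjOn L S) (hTinj : Set.InjOn T S) (hBT : ∀ i ∈ S, T i ≠ B)
    (hA : #A < k) (hB : #B = k + 1) (hAB : A ⊆ B) : ¬ MiddlesClosed S L M T A B k := by
  intro hcl
  have hsplit : ∑ X ∈ insert B (S.image T), #{g ∈ S | M g ⊆ X} =
      #{g ∈ S | M g ⊆ B} + ∑ h ∈ S, #{g ∈ S | M g ⊆ T h} := by
    rw [sum_insert fun hB => by obtain ⟨h, hh, he⟩ := mem_image.1 hB; exact hBT h hh he,
      sum_image hTinj]
  have hcount₁ := sum_card_bipartiteAbove_eq_sum_card_bipartiteBelow (s := S)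
    (t := insert B (S.image T)) (r := fun g X => M g ⊆ X)
  have hcount₂ := sum_card_bipartiteAbove_eq_sum_card_bipartiteBelow (s := S) (t := S)
    (r := fun i h => L i ⊆ M h)
  simp only [bipartiteAbove, bipartiteBelow] at hcount₁ hcount₂
  have htop := sum_le_sum fun h hh =>
    Nat.add_one_le_of_lt (hcl.card_bots_below_lt_card_mids_below hL hM hT hMT hLinj hh)
  have hbot := sum_le_sum fun i hi =>
    Nat.add_one_le_of_lt (hcl.card_tops_above_lt_card_mids_above hL hM hT hB hLM hi)
  simp only [sum_add_distrib, sum_const, smul_eq_mul, mul_one] at htop hbot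
  have := hcl.card_mids_below_pos hA hB hAB
  omega

theorem exists_free_middle {s : Finset ι} {𝒯 ℬ : Set (Finset α)}
    (hL : ∀ i ∈ s, #(L i) + 1 = k) (hM : ∀ i ∈ s, #(M i) = k)
    (hT : ∀ i ∈ s, #(T i) = k + 1) (hLM : ∀ i ∈ s, L i ⊆ M i) (hMT : ∀ i ∈ s, M i ⊆ T i)
    (hLinj : Set.InjOn L s) (hTinj : Set.InjOn T s) (hBT : ∀ i ∈ s, T i ≠ B)
    (hA : #A < k) (hB : #B = k + 1) (hAB : A ⊆ B) (hB𝒯 : B ∈ 𝒯) (hAℬ : A ∈ ℬ)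
    (h𝒯 : ∀ i ∈ s, ∀ X ∈ 𝒯, M i ⊆ X → T i ∈ 𝒯) (hℬ : ∀ i ∈ s, ∀ Y ∈ ℬ, Y ⊆ M i → L i ∈ ℬ) :
    ∃ μ : Finset α, #μ = k ∧ (∀ i ∈ s, M i ≠ μ) ∧ (∃ X ∈ 𝒯, μ ⊆ X) ∧ ∃ Y ∈ ℬ, Y ⊆ μ := by
  classical
  set S := s.filter fun i => L i ∈ ℬ ∧ T i ∈ 𝒯
  have hS : S ⊆ s := filter_subset _ _
  have h𝒳 : ∀ X ∈ insert B (S.image T), X ∈ 𝒯 := by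
    simp only [mem_insert, mem_image, mem_filter, S]
    rintro X (rfl | ⟨i, ⟨-, -, hi⟩, rfl⟩) <;> assumption
  have h𝒴 : ∀ Y ∈ insert A (S.image L), Y ∈ ℬ := by
    simp only [mem_insert, mem_image, mem_filter, S]
    rintro Y (rfl | ⟨i, ⟨-, hi, -⟩, rfl⟩) <;> assumption
  by_contra hno
  refine not_middlesClosed (S := S) (fun i hi => hL i (hS hi)) (fun i hi => hM i (hS hi))
    (fun i hi => hT i (hS hi)) (fun i hi => hLM i (hS hi)) (fun i hi => hMT i (hS hi))
    (hLinj.mono hS) (hTinj.mono hS) (fun i hi => hBT i (hS hi)) hA hB hAB ?_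
  rintro μ hμ ⟨X, hX, hμX⟩ ⟨Y, hY, hYμ⟩
  by_contra hμS
  refine hno ⟨μ, hμ, fun i hi hMi => hμS ⟨i, mem_filter.2 ⟨hi, ?_, ?_⟩, hMi⟩,
    ⟨X, h𝒳 X hX, hμX⟩, Y, h𝒴 Y hY, hYμ⟩
  · exact hℬ i hi Y (h𝒴 Y hY) (hMi ▸ hYμ)
  · exact h𝒯 i hi X (h𝒳 X hX) (hMi ▸ hμX)

theorem exists_reroute [DecidableEq ι] {s : Finset ι} {o : ι} (ho : o ∉ s)
    (hL : ∀ i ∈ s, #(L i) + 1 = k) (hM : ∀ i ∈ s, #(M i) = k)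
    (hT : ∀ i ∈ s, #(T i) = k + 1) (hLM : ∀ i ∈ s, L i ⊆ M i) (hMT : ∀ i ∈ s, M i ⊆ T i)
    (hLinj : Set.InjOn L s) (hMinj : Set.InjOn M s) (hTinj : Set.InjOn T s)
    (hAL : ∀ i ∈ s, L i ≠ A) (hBT : ∀ i ∈ s, T i ≠ B)
    (hA : #A < k) (hB : #B = k + 1) (hAB : A ⊆ B) :
    ∃ μ : Finset α, #μ = k ∧ ∃ bot mid top : ι → Finset α,
      Set.BijOn bot (insert o s) (insert A (L '' s)) ∧
      Set.BijOn mid (insert o s) (insert μ (M '' s)) ∧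
      Set.BijOn top (insert o s) (insert B (T '' s)) ∧
      ∀ i ∈ insert o (s : Set ι), bot i ⊆ mid i ∧ mid i ⊆ top i := by
  obtain ⟨μ, hμ, hμM, ⟨X, hX, hμX⟩, Y, hY, hYμ⟩ := exists_free_middle hL hM hT hLM hMT hLinj
    hTinj hBT hA hB hAB (𝒯 := {X | ShiftReachable (fun i X => M i ⊆ X) T B s X})
    (ℬ := {Y | ShiftReachable (fun i Y => Y ⊆ M i) L A s Y}) ShiftReachable.refl
    ShiftReachable.refl (fun _ hi _ hX hMX => ShiftReachable.step hX hi hMX)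
    fun _ hi _ hY hYM => ShiftReachable.step hY hi hYM
  have hBT' : B ∉ T '' s := fun ⟨i, hi, h⟩ => hBT i hi h
  have hAL' : A ∉ L '' s := fun ⟨i, hi, h⟩ => hAL i hi h
  have hμM' : μ ∉ M '' s := fun ⟨i, hi, h⟩ => hμM i hi h
  obtain ⟨τ, hMτ, hτ⟩ := ShiftReachable.exists_bijOn hTinj hBT' hMT hX
  obtain ⟨β, hβM, hβ⟩ := ShiftReachable.exists_bijOn hLinj hAL' hLM hY
  have hMbij : Set.BijOn M s (insert μ (M '' s) \ {μ}) := by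
    rw [Set.insert_sdiff_self_of_notMem hμM']
    exact hMinj.bijOn_image
  refine ⟨μ, hμ, Function.update β o Y, Function.update M o μ, Function.update τ o X,
    hβ.update_insert ho hY.mem_insert_image, hMbij.update_insert ho (Set.mem_insert _ _),
    hτ.update_insert ho hX.mem_insert_image, ?_⟩
  rintro i (rfl | hi)
  · simpa using ⟨hYμ, hμX⟩
  · have hio : i ≠ o := ne_of_mem_of_not_mem hi ho
    simpa [hio] using ⟨hβM i hi, hMτ i hi⟩

end ChainReroute

open Finset

lemma IsChainF.subset_of_card_le {C : Finset (Finset ℕ)} (hC : IsChainF C) {X Y : Finset ℕ}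
    (hX : X ∈ C) (hY : Y ∈ C) (h : #X ≤ #Y) : X ⊆ Y :=
  (hC X hX Y hY).elim id fun hYX => (eq_of_subset_of_card_le hYX h).symm ▸ subset_rfl

lemma isChainF_triple {a b c : Finset ℕ} (hab : a ⊆ b) (hbc : b ⊆ c) :
    IsChainF {a, b, c} := by
  have hac := hab.trans hbc
  intro X hX Y hY
  simp only [mem_insert, mem_singleton] at hX hY
  rcases hX with rfl | rfl | rfl <;> rcases hY with rfl | rfl | rfl <;> simp [*]

lemma skiplessChain_triple {a b c : Finset ℕ} (hab : a ⊆ b) (hbc : b ⊆ c)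
    (ha : #a + 1 = #b) (hb : #b + 1 = #c) : SkiplessChain {a, b, c} := by
  refine ⟨isChainF_triple hab hbc, fun X hX Y hY j hXj hjY => ?_⟩
  simp only [mem_insert, mem_singleton] at hX hY
  have hj : j = #a ∨ j = #b ∨ j = #c := by
    rcases hX with rfl | rfl | rfl <;> rcases hY with rfl | rfl | rfl <;> omega
  rcases hj with rfl | rfl | rfl
  exacts [⟨a, by simp, rfl⟩, ⟨b, by simp, rfl⟩, ⟨c, by simp, rfl⟩]

lemma disjoint_triple {a b c a' b' c' : Finset ℕ} {k : ℕ} (ha : #a < k) (hb : #b = k)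
    (hc : #c = k + 1) (ha' : #a' < k) (hb' : #b' = k) (hc' : #c' = k + 1)
    (haa : a ≠ a') (hbb : b ≠ b') (hcc : c ≠ c') :
    Disjoint ({a, b, c} : Finset (Finset ℕ)) {a', b', c'} := by
  rw [disjoint_left]
  intro X hX hX'
  simp only [mem_insert, mem_singleton] at hX hX'
  rcases hX with rfl | rfl | rfl <;> rcases hX' with h | h | h <;>
    first
      | exact haa h
      | exact hbb h
      | exact hcc h
      | (subst h; omega)

lemma SkiplessChain.exists_eq_triple {C : Finset (Finset ℕ)} {r : ℕ} (hC : SkiplessChain C)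
    (hlo : ∃ X ∈ C, #X = r - 2) (hhi : ∃ X ∈ C, #X = r)
    (hcard : ∀ X ∈ C, r - 2 ≤ #X ∧ #X ≤ r) :
    ∃ L M T, C = {L, M, T} ∧ L ⊆ M ∧ M ⊆ T ∧ #L = r - 2 ∧ #M = r - 1 ∧ #T = r := by
  obtain ⟨L, hL, hLc⟩ := hlo
  obtain ⟨T, hT, hTc⟩ := hhi
  obtain ⟨M, hM, hMc⟩ := hC.2 L hL T hT (r - 1) (by omega) (by omega)
  have hsub : ∀ {X Y}, X ∈ C → Y ∈ C → #X ≤ #Y → X ⊆ Y := IsChainF.subset_of_card_le hC.1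
  refine ⟨L, M, T, ?_, hsub hL hM (by omega), hsub hM hT (by omega), hLc, hMc, hTc⟩
  ext X
  simp only [mem_insert, mem_singleton]
  refine ⟨fun hX => ?_, by rintro (rfl | rfl | rfl) <;> assumption⟩
  have heq : ∀ Y ∈ C, #X = #Y → X = Y := fun Y hY h =>
    subset_antisymm (hsub hX hY h.le) (hsub hY hX h.ge)
  have hXc : #X = r - 2 ∨ #X = r - 1 ∨ #X = r := by
    have := hcard X hX
    omega
  rcases hXc with h | h | h
  exacts [Or.inl (heq L hL (by omega)), Or.inr (Or.inl (heq M hM (by omega))),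
    Or.inr (Or.inr (heq T hT (by omega)))]

theorem exists_chains_of_triples_of_last_eq {n r m : ℕ} (hr : 3 ≤ r) (hm : 0 < m)
    {A : Finset ℕ} {bot mid top : ℕ → Finset ℕ} {𝔅 𝔐 𝔗 : Set (Finset ℕ)}
    (hbot : Set.BijOn bot (Set.Iio m) 𝔅) (hmid : Set.BijOn mid (Set.Iio m) 𝔐)
    (htop : Set.BijOn top (Set.Iio m) 𝔗) (hsub : ∀ i < m, bot i ⊆ mid i ∧ mid i ⊆ top i)
    (hlast : bot (m - 1) = A) (hAcard : #A ≤ r - 2) (h𝔅 : ∀ X ∈ 𝔅, X ≠ A → #X = r - 2)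
    (h𝔐 : ∀ X ∈ 𝔐, #X = r - 1) (h𝔗 : ∀ X ∈ 𝔗, #X = r ∧ X ⊆ range n) :
    ∃ D : ℕ → Finset (Finset ℕ),
      (∀ i < m, ∀ j < m, i ≠ j → Disjoint (D i) (D j)) ∧
      (∀ i < m, IsChainF (D i)) ∧
      (∀ i < m, ∀ X ∈ D i, X ⊆ range n) ∧
      (∀ i < m - 1, SkiplessChain (D i) ∧ (∃ X ∈ D i, #X = r - 2) ∧
        (∃ X ∈ D i, #X = r) ∧ ∀ X ∈ D i, r - 2 ≤ #X ∧ #X ≤ r) ∧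
      (A ∈ D (m - 1) ∧ (∀ X ∈ D (m - 1), A ⊆ X) ∧
        (∃ X ∈ D (m - 1), #X = r - 1) ∧ (∃ X ∈ D (m - 1), #X = r)) ∧
      ∀ X ∈ 𝔅 ∪ 𝔐 ∪ 𝔗, ∃ i < m, X ∈ D i := by
  have hlt : m - 1 < m := by omega
  have hbotc : ∀ i < m - 1, #(bot i) = r - 2 := fun i hi =>
    h𝔅 _ (hbot.mapsTo (by omega : i < m)) fun h => hi.ne (hbot.injOn (by omega : i < m) hlt
      (h.trans hlast.symm))
  have hbotlt : ∀ i < m, #(bot i) < r - 1 := by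
    intro i hi
    rcases (by omega : i < m - 1 ∨ i = m - 1) with hi | rfl
    · rw [hbotc i hi]; omega
    · rw [hlast]; omega
  have hmidc : ∀ i < m, #(mid i) = r - 1 := fun i hi => h𝔐 _ (hmid.mapsTo hi)
  have htopc : ∀ i < m, #(top i) = r := fun i hi => (h𝔗 _ (htop.mapsTo hi)).1
  refine ⟨fun i => {bot i, mid i, top i}, fun i hi j hj hij => ?_, fun i hi => ?_,
    fun i hi X hX => ?_, fun i hi => ?_, ?_, ?_⟩
  · exact disjoint_triple (hbotlt i hi) (hmidc i hi) (by rw [htopc i hi]; omega) (hbotlt j hj)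
      (hmidc j hj) (by rw [htopc j hj]; omega) (fun h => hij (hbot.injOn hi hj h))
      (fun h => hij (hmid.injOn hi hj h)) fun h => hij (htop.injOn hi hj h)
  · exact isChainF_triple (hsub i hi).1 (hsub i hi).2
  · obtain ⟨h1, h2⟩ := hsub i hi
    have h3 := (h𝔗 _ (htop.mapsTo hi)).2
    simp only [mem_insert, mem_singleton] at hX
    rcases hX with rfl | rfl | rfl
    exacts [h1.trans (h2.trans h3), h2.trans h3, h3]
  · have hi' : i < m := by omega
    obtain ⟨hb, hm, ht⟩ : _ ∧ _ ∧ _ := ⟨hbotc i hi, hmidc i hi', htopc i hi'⟩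
    refine ⟨skiplessChain_triple (hsub i hi').1 (hsub i hi').2 (by omega) (by omega),
      ⟨_, by simp, hb⟩, ⟨_, by simp, ht⟩, fun X hX => ?_⟩
    simp only [mem_insert, mem_singleton] at hX
    rcases hX with rfl | rfl | rfl <;> omega
  · obtain ⟨h1, h2⟩ := hsub _ hlt
    rw [hlast] at h1
    simp only [hlast]
    refine ⟨by simp, fun X hX => ?_, ⟨_, by simp, hmidc _ hlt⟩, ⟨_, by simp, htopc _ hlt⟩⟩
    simp only [mem_insert, mem_singleton] at hX
    rcases hX with rfl | rfl | rfl
    exacts [subset_rfl, h1, h1.trans h2]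
  · rintro X ((hX | hX) | hX)
    exacts [(hbot.surjOn hX).imp fun x hx => ⟨hx.1, by simp [← hx.2]⟩,
      (hmid.surjOn hX).imp fun x hx => ⟨hx.1, by simp [← hx.2]⟩,
      (htop.surjOn hX).imp fun x hx => ⟨hx.1, by simp [← hx.2]⟩]

theorem exists_chains_of_triples {n r m : ℕ} (hr : 3 ≤ r) {A : Finset ℕ}
    {bot mid top : ℕ → Finset ℕ} {𝔅 𝔐 𝔗 : Set (Finset ℕ)}
    (hbot : Set.BijOn bot (Set.Iio m) 𝔅) (hmid : Set.BijOn mid (Set.Iio m) 𝔐)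
    (htop : Set.BijOn top (Set.Iio m) 𝔗) (hsub : ∀ i < m, bot i ⊆ mid i ∧ mid i ⊆ top i)
    (hA𝔅 : A ∈ 𝔅) (hAcard : #A ≤ r - 2) (h𝔅 : ∀ X ∈ 𝔅, X ≠ A → #X = r - 2)
    (h𝔐 : ∀ X ∈ 𝔐, #X = r - 1) (h𝔗 : ∀ X ∈ 𝔗, #X = r ∧ X ⊆ range n) :
    ∃ D : ℕ → Finset (Finset ℕ),
      (∀ i < m, ∀ j < m, i ≠ j → Disjoint (D i) (D j)) ∧
      (∀ i < m, IsChainF (D i)) ∧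
      (∀ i < m, ∀ X ∈ D i, X ⊆ range n) ∧
      (∀ i < m - 1, SkiplessChain (D i) ∧ (∃ X ∈ D i, #X = r - 2) ∧
        (∃ X ∈ D i, #X = r) ∧ ∀ X ∈ D i, r - 2 ≤ #X ∧ #X ≤ r) ∧
      (A ∈ D (m - 1) ∧ (∀ X ∈ D (m - 1), A ⊆ X) ∧
        (∃ X ∈ D (m - 1), #X = r - 1) ∧ (∃ X ∈ D (m - 1), #X = r)) ∧
      ∀ X ∈ 𝔅 ∪ 𝔐 ∪ 𝔗, ∃ i < m, X ∈ D i := by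
  obtain ⟨a, ha : a < m, rfl⟩ := hbot.surjOn hA𝔅
  have hσ : Set.BijOn (Equiv.swap a (m - 1)) (Set.Iio m) (Set.Iio m) :=
    Equiv.swap_bijOn_self (by simp only [Set.mem_Iio]; omega)
  exact exists_chains_of_triples_of_last_eq hr (by omega) (hbot.comp hσ) (hmid.comp hσ)
    (htop.comp hσ) (fun i hi => hsub _ (hσ.mapsTo hi)) (by simp) hAcard h𝔅 h𝔐 h𝔗

theorem stmt8_general (n r m : ℕ) (hr : 3 ≤ r) (hm : 1 ≤ m)
    (C : ℕ → Finset (Finset ℕ))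
    (hCsub : ∀ i < m - 1, ∀ X ∈ C i, X ⊆ Finset.range n)
    (hCchain : ∀ i < m - 1, SkiplessChain (C i))
    (hCdisj : ∀ i < m - 1, ∀ j < m - 1, i ≠ j → Disjoint (C i) (C j))
    (hClayers : ∀ i < m - 1, (∃ X ∈ C i, X.card = r - 2) ∧ (∃ X ∈ C i, X.card = r) ∧
      ∀ X ∈ C i, r - 2 ≤ X.card ∧ X.card ≤ r)
    (A B : Finset ℕ) (hBsub : B ⊆ Finset.range n) (hBcard : B.card = r)
    (hAB : A ⊆ B) (hAcard : A.card ≤ r - 2)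
    (hAnot : ∀ i < m - 1, A ∉ C i) (hBnot : ∀ i < m - 1, B ∉ C i) :
    ∃ D : ℕ → Finset (Finset ℕ),
      (∀ i < m, ∀ j < m, i ≠ j → Disjoint (D i) (D j)) ∧
      (∀ i < m, IsChainF (D i)) ∧
      (∀ i < m, ∀ X ∈ D i, X ⊆ Finset.range n) ∧
      (∀ i < m - 1, SkiplessChain (D i) ∧ (∃ X ∈ D i, X.card = r - 2) ∧
        (∃ X ∈ D i, X.card = r) ∧ ∀ X ∈ D i, r - 2 ≤ X.card ∧ X.card ≤ r) ∧
      (A ∈ D (m - 1) ∧ (∀ X ∈ D (m - 1), A ⊆ X) ∧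
        (∃ X ∈ D (m - 1), X.card = r - 1) ∧ (∃ X ∈ D (m - 1), X.card = r)) ∧
      (∀ X : Finset ℕ, ((∃ i < m - 1, X ∈ C i) ∨ X = A ∨ X = B) →
        ∃ i < m, X ∈ D i) := by
  obtain ⟨mm, rfl⟩ : ∃ mm, m = mm + 1 := ⟨m - 1, by omega⟩
  simp only [Nat.add_sub_cancel] at hCsub hCchain hCdisj hClayers hAnot hBnot ⊢
  choose! L M T hC hLM hMT hL hM hT using fun i (hi : i ∈ range mm) =>
    have hi := mem_range.1 hi
    (hCchain i hi).exists_eq_triple (hClayers i hi).1 (hClayers i hi).2.1 (hClayers i hi).2.2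
  have hinj : ∀ f : ℕ → Finset ℕ, (∀ i ∈ range mm, f i ∈ C i) → Set.InjOn f (range mm) :=
    fun f hf i hi j hj hij => by_contra fun hne => disjoint_left.1
      (hCdisj i (mem_range.1 hi) j (mem_range.1 hj) hne) (hf i hi) (hij ▸ hf j hj)
  obtain ⟨μ, hμ, bot, mid, top, hbot, hmid, htop, hsub⟩ := ChainReroute.exists_reroute
    (k := r - 1) (A := A) (B := B) notMem_range_self
    (fun i hi => by rw [hL i hi]; omega) hM (fun i hi => by rw [hT i hi]; omega) hLM hMT
    (hinj L fun i hi => by simp [hC i hi]) (hinj M fun i hi => by simp [hC i hi])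
    (hinj T fun i hi => by simp [hC i hi])
    (fun i hi h => hAnot i (mem_range.1 hi) (by simp [← h, hC i hi]))
    (fun i hi h => hBnot i (mem_range.1 hi) (by simp [← h, hC i hi])) (by omega) (by omega) hAB
  rw [← coe_insert, ← range_add_one, coe_range] at hbot hmid htop hsub
  obtain ⟨D, hdisj, hchain, hrange, hlayers, hA, hcover⟩ := exists_chains_of_triples (n := n) hr
    hbot hmid htop hsub (Set.mem_insert A _) hAcard
    (by rintro X (rfl | ⟨i, hi, rfl⟩) hXA; exacts [absurd rfl hXA, hL i hi])
    (by rintro X (rfl | ⟨i, hi, rfl⟩); exacts [hμ, hM i hi])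
    (by
      rintro X (rfl | ⟨i, hi, rfl⟩)
      exacts [⟨hBcard, hBsub⟩, ⟨hT i hi, hCsub i (mem_range.1 hi) _ (by simp [hC i hi])⟩])
  refine ⟨D, hdisj, hchain, hrange, hlayers, hA, ?_⟩
  rintro X (⟨i, hi, hX⟩ | rfl | rfl) <;> apply hcover
  · rw [hC i (mem_range.2 hi), mem_insert, mem_insert, mem_singleton] at hX
    rcases hX with rfl | rfl | rfl <;> grind
  all_goals simp

/-- Rerouting lemma for the case of two layers apart. -/
theorem stmt8 (n r m : ℕ) (hr : 3 ≤ r) (hrn : r ≤ n) (hm : 1 ≤ m)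
    (C : ℕ → Finset (Finset ℕ))
    (hCsub : ∀ i < m - 1, ∀ X ∈ C i, X ⊆ Finset.range n)
    (hCchain : ∀ i < m - 1, SkiplessChain (C i))
    (hCdisj : ∀ i < m - 1, ∀ j < m - 1, i ≠ j → Disjoint (C i) (C j))
    (hClayers : ∀ i < m - 1, (∃ X ∈ C i, X.card = r - 2) ∧ (∃ X ∈ C i, X.card = r) ∧
      ∀ X ∈ C i, r - 2 ≤ X.card ∧ X.card ≤ r)
    (A B : Finset ℕ) (hBsub : B ⊆ Finset.range n) (hBcard : B.card = r)
    (hAB : A ⊆ B) (hAcard : A.card ≤ r - 2)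
    (hAnot : ∀ i < m - 1, A ∉ C i) (hBnot : ∀ i < m - 1, B ∉ C i) :
    ∃ D : ℕ → Finset (Finset ℕ),
      (∀ i < m, ∀ j < m, i ≠ j → Disjoint (D i) (D j)) ∧
      (∀ i < m, IsChainF (D i)) ∧
      (∀ i < m, ∀ X ∈ D i, X ⊆ Finset.range n) ∧
      (∀ i < m - 1, SkiplessChain (D i) ∧ (∃ X ∈ D i, X.card = r - 2) ∧
        (∃ X ∈ D i, X.card = r) ∧ ∀ X ∈ D i, r - 2 ≤ X.card ∧ X.card ≤ r) ∧
      (A ∈ D (m - 1) ∧ (∀ X ∈ D (m - 1), A ⊆ X) ∧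
        (∃ X ∈ D (m - 1), X.card = r - 1) ∧ (∃ X ∈ D (m - 1), X.card = r)) ∧
      (∀ X : Finset ℕ, ((∃ i < m - 1, X ∈ C i) ∨ X = A ∨ X = B) →
        ∃ i < m, X ∈ D i) :=
  stmt8_general n r m hr hm C hCsub hCchain hCdisj hClayers A B hBsub hBcard hAB hAcard hAnot hBnot
end

section
/- Let t > ⌊ℓ/2⌋ where ℓ is the smallest integer j with C(j, ⌊j/2⌋) ≥ k - 1, and let C be an initial segment of the colex order on t-element sets of size at most k - 1. Then ν(C) = |C|, i.e. there is a matching from C into its shadow ∂C saturating C. -/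
open Finset
open scoped FinsetFamily

section Shadow

variable {α β : Type*} [DecidableEq α] [DecidableEq β]

lemma shadow_map_mapEmbedding (f : α ↪ β) (ℬ : Finset (Finset α)) :
    ∂ (ℬ.map (mapEmbedding f).toEmbedding) = (∂ ℬ).map (mapEmbedding f).toEmbedding := by
  ext C
  simp only [mem_shadow_iff, mem_map, RelEmbedding.coe_toEmbedding, mapEmbedding_apply]
  constructor
  · rintro ⟨_, ⟨B, hB, rfl⟩, _, ha, rfl⟩
    obtain ⟨x, hx, rfl⟩ := mem_map.1 ha
    exact ⟨B.erase x, ⟨B, hB, x, hx, rfl⟩, map_erase f B x⟩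
  · rintro ⟨_, ⟨B, hB, x, hx, rfl⟩, rfl⟩
    exact ⟨B.map f, ⟨B, hB, rfl⟩, f x, mem_map_of_mem f hx, (map_erase f B x).symm⟩

theorem card_le_card_shadow_of_subset {U : Finset α} {t : ℕ} {𝒜 : Finset (Finset α)}
    (hU : ∀ A ∈ 𝒜, A ⊆ U) (h𝒜 : (𝒜 : Set (Finset α)).Sized t) (hUt : #U < 2 * t) :
    #𝒜 ≤ #(∂ 𝒜) := by
  set e := (mapEmbedding (Function.Embedding.subtype (· ∈ U))).toEmbedding
  set ℬ : Finset (Finset U) := 𝒜.image (·.subtype (· ∈ U))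
  have hℬ : ℬ.map e = 𝒜 := by
    rw [map_eq_image, image_image]
    exact (image_congr fun A hA => subtype_map_of_mem (hU A hA)).trans image_id
  have hℬt : (ℬ : Set (Finset U)).Sized t := fun B hB => by
    rw [← card_map (Function.Embedding.subtype (· ∈ U))]
    exact h𝒜 (hℬ ▸ mem_map_of_mem e hB)
  have hLYM := card_mul_le_card_shadow_mul hℬt
  rw [Fintype.card_coe] at hLYM
  rw [← hℬ, shadow_map_mapEmbedding, card_map, card_map]
  exact Nat.le_of_mul_le_mul_right
    (hLYM.trans (Nat.mul_le_mul_left _ (by omega))) (by omega)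

end Shadow

section Matching

lemma nu_eq_card_of_injOn {𝒜 : Finset (Finset ℕ)} {f : Finset ℕ → Finset ℕ}
    (hinj : Set.InjOn f 𝒜) (hf : ∀ A ∈ 𝒜, f A ∈ ∂ 𝒜 ∧ f A ⊆ A) : nu 𝒜 = #𝒜 :=
  IsGreatest.csSup_eq ⟨⟨𝒜, subset_rfl, rfl, f, hinj, hf⟩,
    by rintro _ ⟨s, hs, rfl, -⟩; exact card_le_card hs⟩

theorem exists_injOn_mem_shadow_subset {𝒜 : Finset (Finset ℕ)}
    (h : ∀ ℬ ⊆ 𝒜, #ℬ ≤ #(∂ ℬ)) :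
    ∃ f : Finset ℕ → Finset ℕ, Set.InjOn f 𝒜 ∧ ∀ A ∈ 𝒜, f A ∈ ∂ 𝒜 ∧ f A ⊆ A := by
  set nbhd : 𝒜 → Finset (Finset ℕ) := fun A => (∂ 𝒜).filter (· ⊆ A.1)
  have hall : ∀ s : Finset 𝒜, #s ≤ #(s.biUnion nbhd) := by
    intro s
    have hshadow : ∂ (s.map (Function.Embedding.subtype _)) ⊆ s.biUnion nbhd := by
      intro C hC
      obtain ⟨_, hA, a, ha, rfl⟩ := mem_shadow_iff.1 hC
      obtain ⟨A, hAs, rfl⟩ := mem_map.1 hA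
      exact mem_biUnion.2 ⟨A, hAs, mem_filter.2 ⟨erase_mem_shadow A.2 ha, erase_subset _ _⟩⟩
    calc #s = #(s.map (Function.Embedding.subtype _)) := (card_map _).symm
      _ ≤ _ := h _ fun _ hA => by obtain ⟨A, -, rfl⟩ := mem_map.1 hA; exact A.2
      _ ≤ _ := card_le_card hshadow
  obtain ⟨g, hginj, hg⟩ := (all_card_le_biUnion_card_iff_exists_injective nbhd).1 hall
  refine ⟨fun A => if hA : A ∈ 𝒜 then g ⟨A, hA⟩ else ∅, fun A hA B hB hAB => ?_, fun A hA => ?_⟩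
  · simp only [dif_pos (mem_coe.1 hA), dif_pos (mem_coe.1 hB)] at hAB
    exact congrArg Subtype.val (hginj hAB)
  · simpa only [dif_pos hA] using mem_filter.1 (hg ⟨A, hA⟩)

end Matching

section ColexSegment

variable {m t : ℕ} {A : Finset ℕ}

lemma card_of_mem_colexSeg (hA : A ∈ colexSeg m t) : #A = t :=
  (mem_filter.1 hA).2.1

/-- An element `x ≥ n` of `A` puts every `t`-subset of `range x` colex-below `A`,
which is already `choose n t ≥ m` sets. -/
theorem subset_range_of_mem_colexSeg {n : ℕ} (hm : m ≤ n.choose t) (hA : A ∈ colexSeg m t) :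
    A ⊆ range n := by
  obtain ⟨hArange, -, hbelow⟩ := by simpa only [colexSeg, mem_filter, mem_powerset] using hA
  intro x hx
  by_contra hxn
  rw [mem_range, not_lt] at hxn
  have hxm : x < t + m := mem_range.1 (hArange hx)
  have hsub : powersetCard t (range x) ⊆ (range (t + m)).powerset.filter
      (fun B => #B = t ∧ toColex B < toColex A) := by
    intro B hB
    obtain ⟨hBx, hBt⟩ := mem_powersetCard.1 hB
    refine mem_filter.2 ⟨mem_powerset.2 (hBx.trans (range_subset_range.2 hxm.le)), hBt, ?_⟩
    exact Colex.toColex_lt_toColex_iff_exists_forall_lt.2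
      ⟨x, hx, fun h => (mem_range.1 (hBx h)).false, fun b hb _ => mem_range.1 (hBx hb)⟩
  have := card_le_card hsub
  rw [card_powersetCard, card_range] at this
  have := Nat.choose_le_choose t hxn
  omega

end ColexSegment

theorem Nat.choose_middle_le_choose_two_mul_sub_one {ℓ t : ℕ} (h : ℓ / 2 < t) :
    ℓ.choose (ℓ / 2) ≤ (2 * t - 1).choose t :=
  calc ℓ.choose (ℓ / 2) ≤ (2 * t - 1).choose (ℓ / 2) := Nat.choose_le_choose _ (by omega)
    _ ≤ (2 * t - 1).choose ((2 * t - 1) / 2) := Nat.choose_le_middle _ _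
    _ = (2 * t - 1).choose t := by
      rw [← Nat.choose_symm (by omega : t ≤ 2 * t - 1)]
      congr 1
      omega

theorem stmt14_general (k ℓ t m : ℕ)
    (hl1 : k - 1 ≤ Nat.choose ℓ (ℓ / 2))
    (ht : ℓ / 2 < t) (hm : m ≤ k - 1) :
    nu (colexSeg m t) = (colexSeg m t).card := by
  have hm' : m ≤ (2 * t - 1).choose t :=
    hm.trans (hl1.trans (Nat.choose_middle_le_choose_two_mul_sub_one ht))
  obtain ⟨f, hinj, hf⟩ := exists_injOn_mem_shadow_subset fun ℬ hℬ =>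
    card_le_card_shadow_of_subset (U := range (2 * t - 1))
      (fun A hA => subset_range_of_mem_colexSeg hm' (hℬ hA))
      (fun A hA => card_of_mem_colexSeg (hℬ hA)) (by rw [card_range]; omega)
  exact nu_eq_card_of_injOn hinj hf

/-- For `t > ⌊ℓ/2⌋`, an initial segment of colex on layer `t` of size at most
`k - 1` has a matching into its shadow saturating it. -/
theorem stmt14 (k ℓ t m : ℕ) (hk : 2 ≤ k)
    (hl1 : k - 1 ≤ Nat.choose ℓ (ℓ / 2)) (hl2 : ∀ j < ℓ, Nat.choose j (j / 2) < k - 1)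
    (ht : ℓ / 2 < t) (hm : m ≤ k - 1) :
    nu (colexSeg m t) = (colexSeg m t).card :=
  stmt14_general k ℓ t m hl1 ht hm
end

section
/- Let m, r ≥ 1 with m ≥ C(2r-1, r), and let m = C(a_{r_1}, r_1) + ... + C(a_{r_s}, r_s) be the r-expansion of m. Then: (1) r = r_1 > r_2 > ... > r_s ≥ 1; (2) a_{r_1} > a_{r_2} > ... > a_{r_s} ≥ 1; (3) r_i ≤ ⌈a_{r_i}/2⌉ for all i ∈ [s]. -/
lemma choose_lb {r : ℕ} (hr : 1 ≤ r) : ∀ {n : ℕ}, r ≤ n → n + 1 - r ≤ Nat.choose n r := by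
  intro n hn
  induction n, hn using Nat.le_induction with
  | base => simp [Nat.choose_self]
  | succ n hn ih =>
    have h1 : 1 ≤ Nat.choose n (r - 1) := Nat.choose_pos (by omega)
    have h2 : Nat.choose (n + 1) r = Nat.choose n (r - 1) + Nat.choose n r := by
      have := Nat.choose_succ_succ n (r - 1)
      simp only [Nat.succ_eq_add_one] at this
      rwa [show r - 1 + 1 = r from by omega] at this
    omega

lemma elem_le_headI {l : List (ℕ × ℕ)} (h2 : l.Pairwise (fun p q => q.2 < p.2))
    (h1 : l.Pairwise (fun p q => q.1 < p.1)) :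
    ∀ q ∈ l, q.2 ≤ l.headI.2 ∧ q.1 ≤ l.headI.1 := by
  cases l with
  | nil => simp
  | cons h t =>
    simp only [List.pairwise_cons] at h1 h2
    intro q hq
    rcases List.mem_cons.1 hq with rfl | hq
    · exact ⟨le_rfl, le_rfl⟩
    · exact ⟨(h2.1 q hq).le, (h1.1 q hq).le⟩

/-- The `r`-expansion of `m`, as a list of pairs `(a_{r_i}, r_i)`: take `a_{r_1}`
maximal with `C(a_{r_1}, r_1) ≤ m`, set `m' = m - C(a_{r_1}, r_1)`; if `m' = 0`
stop, otherwise recurse with the largest `r' ≤ r - 1` with `C(2r' - 1, r') ≤ m'`. -/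
def rExpansion (r m : ℕ) : List (ℕ × ℕ) :=
  if hr : r = 0 then [] else
  if hm : m = 0 then [] else
    let a := Nat.findGreatest (fun j => Nat.choose j r ≤ m) (m + r)
    let m' := m - Nat.choose a r
    if m' = 0 then [(a, r)]
    else (a, r) :: rExpansion (Nat.findGreatest (fun j => Nat.choose (2 * j - 1) j ≤ m') (r - 1)) m'
termination_by r
decreasing_by
  have h := Nat.findGreatest_le
    (P := fun j => Nat.choose (2 * j - 1) j ≤
      m - Nat.choose (Nat.findGreatest (fun j => Nat.choose j r ≤ m) (m + r)) r) (r - 1)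
  omega

theorem rExpansion_spec : ∀ r, ∀ m, 1 ≤ r → Nat.choose (2 * r - 1) r ≤ m →
    rExpansion r m ≠ [] ∧
    (rExpansion r m).headI.2 = r ∧
    (rExpansion r m).Pairwise (fun p q => q.2 < p.2) ∧
    (rExpansion r m).Pairwise (fun p q => q.1 < p.1) ∧
    (∀ p ∈ rExpansion r m, 1 ≤ p.2 ∧ 1 ≤ p.1 ∧ p.2 ≤ (p.1 + 1) / 2) ∧
    m = ((rExpansion r m).map (fun p => Nat.choose p.1 p.2)).sum := by
  intro r
  induction r using Nat.strong_induction_on with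
  | _ r IH =>
  intro m hr hm
  have hmr : r ≤ m := by
    have h1 := choose_lb hr (show r ≤ 2 * r - 1 by omega)
    omega
  set a := Nat.findGreatest (fun j => Nat.choose j r ≤ m) (m + r) with ha_def
  have ha1 : 2 * r - 1 ≤ a := Nat.le_findGreatest (by omega) hm
  have haP : Nat.choose a r ≤ m := by
    have := Nat.findGreatest_spec (P := fun j => Nat.choose j r ≤ m)
      (m := 2 * r - 1) (n := m + r) (by omega) hm
    exact this
  have hlt : a + 1 ≤ m + r := by
    have := choose_lb hr (show r ≤ a by omega)
    omega
  have hmax : m < Nat.choose (a + 1) r := by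
    have := Nat.findGreatest_is_greatest (P := fun j => Nat.choose j r ≤ m)
      (n := m + r) (k := a + 1) (by omega) hlt
    omega
  have hsplit : Nat.choose (a + 1) r = Nat.choose a (r - 1) + Nat.choose a r := by
    have := Nat.choose_succ_succ a (r - 1)
    simp only [Nat.succ_eq_add_one] at this
    rwa [show r - 1 + 1 = r from by omega] at this
  have hm'lt : m - Nat.choose a r < Nat.choose a (r - 1) := by omega
  have hEq : rExpansion r m =
      (if m - Nat.choose a r = 0 then [(a, r)] else
        (a, r) :: rExpansion
          (Nat.findGreatest (fun j => Nat.choose (2 * j - 1) j ≤ m - Nat.choose a r) (r - 1))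
          (m - Nat.choose a r)) := by
    rw [rExpansion, dif_neg (show ¬ r = 0 by omega), dif_neg (show ¬ m = 0 by omega)]
  by_cases h0 : m - Nat.choose a r = 0
  · rw [hEq, if_pos h0]
    refine ⟨by simp, rfl, by simp, by simp, ?_, ?_⟩
    · intro p hp
      simp only [List.mem_singleton] at hp
      subst hp
      exact ⟨hr, by omega, by omega⟩
    · simp; omega
  · -- recursive case
    have hm'pos : 1 ≤ m - Nat.choose a r := by omega
    set m' := m - Nat.choose a r with hm'def
    have hr2 : 2 ≤ r := by
      by_contra h
      have hr1 : r = 1 := by omega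
      subst hr1
      have h1 : m ≤ a := by
        have := Nat.le_findGreatest (P := fun j => Nat.choose j 1 ≤ m) (m := m)
          (n := m + 1) (by omega) (by simp)
        exact this
      rw [Nat.choose_one_right] at haP hm'def
      omega
    set r' := Nat.findGreatest (fun j => Nat.choose (2 * j - 1) j ≤ m') (r - 1) with hr'def
    have hQ1 : Nat.choose (2 * 1 - 1) 1 ≤ m' := by simpa using hm'pos
    have hr'1 : 1 ≤ r' := Nat.le_findGreatest (by omega) hQ1
    have hr'le : r' ≤ r - 1 := Nat.findGreatest_le _
    have hQr' : Nat.choose (2 * r' - 1) r' ≤ m' := by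
      have := Nat.findGreatest_spec (P := fun j => Nat.choose (2 * j - 1) j ≤ m')
        (m := 1) (n := r - 1) (by omega) hQ1
      exact this
    obtain ⟨tne, thead2, tp2, tp1, telem, tsum⟩ := IH r' (by omega) m' hr'1 hQr'
    obtain ⟨x, t', hxt⟩ := List.exists_cons_of_ne_nil tne
    rw [hxt] at thead2 tp2 tp1 telem tsum
    simp only [List.headI_cons] at thead2
    have hbound := elem_le_headI tp2 tp1
    simp only [List.headI_cons] at hbound
    have hxsum : Nat.choose x.1 x.2 ≤ m' := by
      simp only [List.map_cons, List.sum_cons] at tsum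
      omega
    have hx2 : x.2 = r' := thead2
    have hxa : x.1 < a := by
      by_cases hcase : r' = r - 1
      · -- C(x.1, r-1) ≤ m' < C(a, r-1)
        by_contra h
        push_neg at h
        have := Nat.choose_le_choose (r - 1) h
        rw [hx2, hcase] at hxsum
        omega
      · -- r' < r - 1
        have hnQ : ¬ Nat.choose (2 * (r' + 1) - 1) (r' + 1) ≤ m' :=
          Nat.findGreatest_is_greatest (P := fun j => Nat.choose (2 * j - 1) j ≤ m')
            (n := r - 1) (k := r' + 1) (by omega) (by omega)
        have hnQ' : m' < Nat.choose (2 * r' + 1) (r' + 1) := by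
          rw [show 2 * (r' + 1) - 1 = 2 * r' + 1 from by omega] at hnQ
          omega
        have hxle : x.1 ≤ 2 * r' := by
          by_contra h
          push_neg at h
          have h1 : Nat.choose (2 * r' + 1) r' ≤ Nat.choose x.1 r' :=
            Nat.choose_le_choose r' h
          have h2 : Nat.choose (2 * r' + 1) r' = Nat.choose (2 * r' + 1) (r' + 1) := by
            have := Nat.choose_symm (n := 2 * r' + 1) (k := r' + 1) (by omega)
            rw [show 2 * r' + 1 - (r' + 1) = r' from by omega] at this
            omega
          rw [hx2] at hxsum
          omega
        omega
    rw [hEq, if_neg h0, hxt]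
    refine ⟨by simp, rfl, ?_, ?_, ?_, ?_⟩
    · rw [List.pairwise_cons]
      refine ⟨?_, tp2⟩
      intro q hq
      have := (hbound q hq).1
      simp only []
      omega
    · rw [List.pairwise_cons]
      refine ⟨?_, tp1⟩
      intro q hq
      have := (hbound q hq).2
      simp only []
      omega
    · intro p hp
      rcases List.mem_cons.1 hp with rfl | hp
      · exact ⟨hr, by omega, by omega⟩
      · exact telem p hp
    · simp only [List.map_cons, List.sum_cons] at tsum ⊢
      omega

/-- Properties of the `r`-expansion: the `r_i` strictly decrease starting from `r`,
the `a_{r_i}` strictly decrease, all are at least `1`, `r_i ≤ ⌈a_{r_i}/2⌉`, and the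
binomial coefficients sum to `m`. -/
theorem stmt15 (m r : ℕ) (hr : 1 ≤ r) (hm : Nat.choose (2 * r - 1) r ≤ m) :
    rExpansion r m ≠ [] ∧
    (rExpansion r m).headI.2 = r ∧
    (rExpansion r m).Pairwise (fun p q => q.2 < p.2) ∧
    (rExpansion r m).Pairwise (fun p q => q.1 < p.1) ∧
    (∀ p ∈ rExpansion r m, 1 ≤ p.2 ∧ 1 ≤ p.1 ∧ p.2 ≤ (p.1 + 1) / 2) ∧
    m = ((rExpansion r m).map (fun p => Nat.choose p.1 p.2)).sum :=
  rExpansion_spec r m hr hm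
end
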